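/- Let F be an n × m Ferrers diagram, 1 ≤ d ≤ min{n,m}, and let C be an F_q-linear subspace of F_q[F] such that every nonzero M ∈ C has rank(M) ≥ d. Then dim_{F_q}(C) ≤ κ(F,d) (the Etzion–Silberstein bound). -/

import Mathlib

/-- The `n × m` matrix board `[n] × [m]` (1-based). -/
def board (n m : ℕ) : Finset (ℕ × ℕ) := Finset.Icc 1 n ×ˢ Finset.Icc 1 m

/-- `F` is an `n × m` Ferrers diagram: contained in the board, contains `(1,1)` and `(n,m)`,
right-aligned and top-aligned. -/
def IsFerrers (n m : ℕ) (F : Finset (ℕ × ℕ)) : Prop :=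
  F ⊆ board n m ∧ (1, 1) ∈ F ∧ (n, m) ∈ F ∧
  (∀ i j, (i, j) ∈ F → j < m → (i, j + 1) ∈ F) ∧
  (∀ i j, (i, j) ∈ F → 1 < i → (i - 1, j) ∈ F)

/-- The `r`-th diagonal of the `n × m` board: `{(i,j) : j - i = m - r}`. -/
def diag (n m r : ℕ) : Finset (ℕ × ℕ) :=
  (board n m).filter (fun p => p.2 + r = p.1 + m)

/-- The height `c_t` of the `t`-th column of `F`. -/
def colH (F : Finset (ℕ × ℕ)) (t : ℕ) : ℕ := (F.filter (fun p => p.2 = t)).card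

/-- `κ_j(F,d) = Σ_{t=1}^{m-d+1+j} max{c_t - j, 0}` (truncated subtraction). -/
def kappaJ (F : Finset (ℕ × ℕ)) (m d j : ℕ) : ℕ :=
  ∑ t ∈ Finset.Icc 1 (m - d + 1 + j), (colH F t - j)

/-- `κ(F,d) = min_{0 ≤ j ≤ d-1} κ_j(F,d)`. -/
noncomputable def kappa (F : Finset (ℕ × ℕ)) (m d : ℕ) : ℕ :=
  sInf (kappaJ F m d '' Set.Iio d)

/-- `Σ_{i=1}^{m+n-1} max{0, |D_i ∩ F| - (d-1)}` (truncated subtraction). -/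
def diagSum (n m : ℕ) (F : Finset (ℕ × ℕ)) (d : ℕ) : ℕ :=
  ∑ i ∈ Finset.Icc 1 (m + n - 1), ((diag n m i ∩ F).card - (d - 1))

/-- The pair `(F,d)` is MDS-constructible. -/
def MDSConstructible (n m : ℕ) (F : Finset (ℕ × ℕ)) (d : ℕ) : Prop :=
  kappa F m d = diagSum n m F d

/-- The space `F_q[F]` of `n × m` matrices over `K` supported on `F` (1-based indexing). -/
def supportedSub (K : Type) [Field K] (n m : ℕ) (F : Finset (ℕ × ℕ)) :
    Submodule K (Matrix (Fin n) (Fin m) K) where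
  carrier := {M | ∀ (i : Fin n) (j : Fin m), ((i : ℕ) + 1, (j : ℕ) + 1) ∉ F → M i j = 0}
  add_mem' := by
    intro a b ha hb i j h
    simp only [Matrix.add_apply, ha i j h, hb i j h, add_zero]
  zero_mem' := by intro i j h; rfl
  smul_mem' := by
    intro c a ha i j h
    simp only [Matrix.smul_apply, ha i j h, smul_zero]

/-!
Pick `j < d` with `κ_j(F,d) = κ(F,d)`. A matrix of `C` vanishing on the cells of `F` below row `j`
and in the first `m - d + 1 + j` columns is supported on `j` rows and `d - 1 - j` columns, so its
rank is below `d` and it is zero. Hence restriction to these cells is injective on `C`, and since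
the columns of `F` are top-aligned, column `t` contributes at most `c_t - j` of them.
-/

namespace Matrix

variable {K : Type*} [Field K] {m n : Type*} [Fintype n]

theorem rank_add_le (A B : Matrix m n K) : (A + B).rank ≤ A.rank + B.rank := by
  rw [rank, rank, rank, mulVecLin_add]
  exact (Submodule.finrank_mono (LinearMap.range_add_le _ _)).trans
    (Submodule.finrank_add_le_finrank_add_finrank _ _)

theorem rank_le_card_add_card_of_eq_zero [Fintype m] (A : Matrix m n K) (s : Finset m)
    (t : Finset n) (h : ∀ i j, i ∉ s → j ∉ t → A i j = 0) :
    A.rank ≤ s.card + t.card := by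
  classical
  let rowsPart : Matrix m n K := of fun i j => if i ∈ s then A i j else 0
  let restPart : Matrix m n K := of fun i j => if i ∈ s then 0 else A i j
  have hsplit : A = rowsPart + restPart := by
    ext i j
    by_cases hi : i ∈ s <;> simp [rowsPart, restPart, hi]
  have hrows : rowsPart.rank ≤ s.card := by
    refine rank_le_card_of_support_subset _ s <|
      Function.support_subset_iff'.2 fun i (hi : i ∉ s) => ?_
    ext j
    simp [rowsPart, hi]
  have hrest : restPart.rank ≤ t.card := by
    rw [← rank_transpose]
    refine rank_le_card_of_support_subset _ t <|
      Function.support_subset_iff'.2 fun j (hj : j ∉ t) => ?_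
    ext i
    by_cases hi : i ∈ s
    · simp [restPart, hi]
    · simpa [restPart, hi] using h i j hi hj
  calc A.rank = (rowsPart + restPart).rank := by rw [← hsplit]
    _ ≤ s.card + t.card := (rank_add_le _ _).trans (add_le_add hrows hrest)

end Matrix

theorem Submodule.finrank_le_card_of_eq_zero {K : Type*} [Field K] {m n : Type*} [Fintype m]
    [Fintype n] (C : Submodule K (Matrix m n K)) (S : Finset (m × n))
    (hS : ∀ M ∈ C, (∀ p ∈ S, M p.1 p.2 = 0) → M = 0) :
    Module.finrank K C ≤ S.card := by
  let restrict : C →ₗ[K] (S → K) :=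
    (LinearMap.pi fun p : S => Matrix.entryLinearMap K K p.1.1 p.1.2) ∘ₗ C.subtype
  have hinj : Function.Injective restrict := by
    refine (injective_iff_map_eq_zero restrict).2 fun M hM => ?_
    exact Subtype.ext <| hS M M.2 fun p hp => congrFun hM ⟨p, hp⟩
  simpa using LinearMap.finrank_le_finrank_of_injective hinj

theorem exists_kappaJ_eq_kappa (F : Finset (ℕ × ℕ)) (m : ℕ) {d : ℕ} (hd : 1 ≤ d) :
    ∃ j < d, kappaJ F m d j = kappa F m d :=
  Nat.sInf_mem (s := kappaJ F m d '' Set.Iio d) ⟨_, 0, hd, rfl⟩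

/-- The cells of `F` strictly below row `j` and in its first `m - d + 1 + j` columns, as 0-based
matrix positions. -/
def kappaRegion (n m : ℕ) (F : Finset (ℕ × ℕ)) (d j : ℕ) : Finset (Fin n × Fin m) :=
  {p | j ≤ p.1 ∧ (p.2 : ℕ) < m - d + 1 + j ∧ ((p.1 : ℕ) + 1, (p.2 : ℕ) + 1) ∈ F}

def IsTopAligned (F : Finset (ℕ × ℕ)) : Prop :=
  ∀ i t, (i, t) ∈ F → 1 < i → (i - 1, t) ∈ F

namespace IsTopAligned

variable {F : Finset (ℕ × ℕ)}

theorem mem_of_le (htop : IsTopAligned F) {i i' t : ℕ} (h : (i, t) ∈ F) (hi' : 1 ≤ i')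
    (hle : i' ≤ i) : (i', t) ∈ F := by
  induction i, hle using Nat.le_induction with
  | base => exact h
  | succ k _ ih => exact ih (by simpa using htop _ _ h (by omega))

theorem card_filter_lt_le_colH (htop : IsTopAligned F) (t j : ℕ) :
    ((F.filter (·.2 = t)).filter (j < ·.1)).card ≤ colH F t - j := by
  set column := F.filter (·.2 = t)
  obtain hempty | ⟨⟨i, t'⟩, hi⟩ := (column.filter (j < ·.1)).eq_empty_or_nonempty
  · simp [hempty]
  simp only [column, Finset.mem_filter] at hi
  obtain ⟨⟨hiF, rfl⟩, hji⟩ := hi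
  have hupper : ((Finset.Icc 1 j).image (·, t')).card ≤ (column.filter (¬ j < ·.1)).card := by
    refine Finset.card_le_card fun q hq => ?_
    obtain ⟨i', hi', rfl⟩ := Finset.mem_image.1 hq
    rw [Finset.mem_Icc] at hi'
    simp only [column, Finset.mem_filter, not_lt]
    exact ⟨⟨htop.mem_of_le hiF hi'.1 (by omega), trivial⟩, hi'.2⟩
  rw [Finset.card_image_of_injective _ (Prod.mk_left_injective t'), Nat.card_Icc] at hupper
  have := Finset.card_filter_add_card_filter_not (s := column) (j < ·.1)
  change _ ≤ column.card - j
  omega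

theorem card_kappaRegion_le (htop : IsTopAligned F) {n m : ℕ} (d j : ℕ) :
    (kappaRegion n m F d j).card ≤ kappaJ F m d j := by
  set P := F.filter fun q => j < q.1 ∧ 1 ≤ q.2 ∧ q.2 ≤ m - d + 1 + j
  have hregion : (kappaRegion n m F d j).card ≤ P.card := by
    refine Finset.card_le_card_of_injOn (fun p => ((p.1 : ℕ) + 1, (p.2 : ℕ) + 1))
      (fun p hp => ?_) (fun p _ q _ h => ?_)
    · simp only [kappaRegion, Finset.coe_filter, Set.mem_ofPred_eq, Finset.mem_univ,
        true_and] at hp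
      simp only [P, Finset.coe_filter, Set.mem_ofPred_eq]
      exact ⟨hp.2.2, by omega⟩
    · simp only [Prod.mk.injEq, add_left_inj] at h
      exact Prod.ext (Fin.ext h.1) (Fin.ext h.2)
  have hfibers : P.card ≤ kappaJ F m d j := by
    rw [Finset.card_eq_sum_card_fiberwise (f := Prod.snd) (t := Finset.Icc 1 (m - d + 1 + j))
      fun q hq => by simp only [P, Finset.coe_filter, Set.mem_ofPred_eq] at hq; simp; omega]
    refine Finset.sum_le_sum fun t _ => le_trans (Finset.card_le_card fun q hq => ?_)
      (htop.card_filter_lt_le_colH t j)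
    simp only [P, Finset.mem_filter] at hq ⊢
    exact ⟨⟨hq.1.1, hq.2⟩, hq.1.2.1⟩
  exact hregion.trans hfibers

end IsTopAligned

theorem rank_lt_of_eq_zero_on_kappaRegion {K : Type} [Field K] {n m d j : ℕ}
    {F : Finset (ℕ × ℕ)} (hj : j < d) {M : Matrix (Fin n) (Fin m) K}
    (hM : M ∈ supportedSub K n m F) (hzero : ∀ p ∈ kappaRegion n m F d j, M p.1 p.2 = 0) :
    M.rank < d := by
  classical
  have hsupp : ∀ i k, i ∉ ({i | i < j} : Finset (Fin n)) →
      k ∉ ({k | k < m - d + 1 + j} : Finset (Fin m))ᶜ → M i k = 0 := by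
    intro i k hi hk
    simp only [Finset.mem_compl, Finset.mem_filter, Finset.mem_univ, true_and, not_le,
      not_lt] at hi hk
    by_cases hF : ((i : ℕ) + 1, (k : ℕ) + 1) ∈ F
    · exact hzero (i, k) (by simp [kappaRegion, hi, hk, hF])
    · exact hM i k hF
  have := M.rank_le_card_add_card_of_eq_zero _ _ hsupp
  rw [Finset.card_compl, Fin.card_filter_val_lt, Fin.card_filter_val_lt, Fintype.card_fin] at this
  omega

theorem etzion_silberstein_bound_general (K : Type) [Field K]
    (n m d : ℕ) (F : Finset (ℕ × ℕ)) (hF : IsFerrers n m F)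
    (hd1 : 1 ≤ d)
    (C : Submodule K (Matrix (Fin n) (Fin m) K)) (hC : C ≤ supportedSub K n m F)
    (hrk : ∀ M ∈ C, M ≠ 0 → d ≤ M.rank) :
    Module.finrank K C ≤ kappa F m d := by
  obtain ⟨j, hjd, hj⟩ := exists_kappaJ_eq_kappa F m hd1
  calc Module.finrank K C ≤ (kappaRegion n m F d j).card :=
        C.finrank_le_card_of_eq_zero _ fun M hM hzero => by
          by_contra hM0
          exact (hrk M hM hM0).not_gt (rank_lt_of_eq_zero_on_kappaRegion hjd (hC hM) hzero)
    _ ≤ kappa F m d := hj ▸ IsTopAligned.card_kappaRegion_le hF.2.2.2.2 d j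

theorem etzion_silberstein_bound (K : Type) [Field K] [Fintype K]
    (n m d : ℕ) (F : Finset (ℕ × ℕ)) (hF : IsFerrers n m F)
    (hd1 : 1 ≤ d) (hd2 : d ≤ min n m)
    (C : Submodule K (Matrix (Fin n) (Fin m) K)) (hC : C ≤ supportedSub K n m F)
    (hrk : ∀ M ∈ C, M ≠ 0 → d ≤ M.rank) :
    Module.finrank K C ≤ kappa F m d :=
  etzion_silberstein_bound_general K n m d F hF hd1 C hC hrk
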